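/- Let W be uniformly distributed on a finite set of size M ≥ 2, let n ≥ 1, and let X₁, …, X_n, Y₁, …, Y_n be random variables with values in finite sets such that for each i: (a) X_i = e_i(W, Y₁, …, Y_{i−1}) almost surely for deterministic functions e_i, and (b) Y_i is conditionally independent of W given (X_i, Y₁, …, Y_{i−1}). Let Ŵ = d(Y₁, …, Y_n) for a deterministic decoding function d, and let P_e = P(Ŵ ≠ W). Then log₂ M ≤ Σ_{i=1}^n I(X_i ; Y_i | Y₁, …, Y_{i−1}) + h_b(P_e) + P_e · log₂ M. -/

import Mathlib

/-!
Write `H_k = H(W | Y_0, …, Y_{k-1})`. Uniformity of `W` gives `H_0 = log₂ M`, and Fano's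
inequality gives `H_n ≤ h_b(P_e) + P_e log₂ M`; so it suffices that each step
`H_i - H_{i+1} = I(W ; Y_i | Y^{<i})` is at most `I(X_i ; Y_i | Y^{<i})`. By the chain rule the
step equals `H(Y_i | Y^{<i}) - H(Y_i | W, Y^{<i})`. Conditioning also on `X_i` can only lower the
subtracted entropy, and the conditional independence of `Y_i` and `W` given `(X_i, Y^{<i})`
turns it into `H(Y_i | X_i, Y^{<i})`, which leaves exactly `I(X_i ; Y_i | Y^{<i})`.
-/

open MeasureTheory

/-- The probability of a set, as a real number. -/
noncomputable def prob {Ω : Type*} [MeasurableSpace Ω] (μ : Measure Ω) (s : Set Ω) : ℝ :=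
  (μ s).toReal

/-- Conditional Shannon entropy (base 2) `H(U | V)`. -/
noncomputable def condEntropy {Ω A B : Type*} [MeasurableSpace Ω] [Fintype A] [Fintype B]
    (μ : Measure Ω) (U : Ω → A) (V : Ω → B) : ℝ :=
  ∑ v : B, ∑ u : A,
    -(prob μ (U ⁻¹' {u} ∩ V ⁻¹' {v})) *
      Real.logb 2 (prob μ (U ⁻¹' {u} ∩ V ⁻¹' {v}) / prob μ (V ⁻¹' {v}))

/-- Conditional mutual information `I(X ; Y | Z) = H(X|Z) + H(Y|Z) - H(X,Y|Z)`. -/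
noncomputable def condMutInfo {Ω A B C : Type*} [MeasurableSpace Ω]
    [Fintype A] [Fintype B] [Fintype C]
    (μ : Measure Ω) (X : Ω → A) (Y : Ω → B) (Z : Ω → C) : ℝ :=
  condEntropy μ X Z + condEntropy μ Y Z - condEntropy μ (fun ω => (X ω, Y ω)) Z

/-- The vector of past outputs `Y^{i-1} = (Y_0, …, Y_{i-1})` before time `i`. -/
def past {Ω 𝒴 : Type*} {n : ℕ} (Y : Fin n → Ω → 𝒴) (i : Fin n) (ω : Ω) : Fin i → 𝒴 :=
  fun j => Y (j.castLT (j.isLt.trans i.isLt)) ω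

/-- The binary entropy function (base 2). -/
noncomputable def binEnt (q : ℝ) : ℝ :=
  -q * Real.logb 2 q - (1 - q) * Real.logb 2 (1 - q)

/-- The log-sum inequality. -/
lemma mul_log_sum_div_le {ι : Type*} [Fintype ι] (a b : ι → ℝ) (ha : ∀ i, 0 ≤ a i)
    (hb : ∀ i, 0 ≤ b i) (hab : ∀ i, b i = 0 → a i = 0) :
    (∑ i, a i) * Real.log ((∑ i, a i) / ∑ i, b i) ≤ ∑ i, a i * Real.log (a i / b i) := by
  set B := ∑ i, b i
  rcases (Finset.sum_nonneg fun i _ => hb i : 0 ≤ B).eq_or_lt with hB | hB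
  · have hb0 i : b i = 0 := (Finset.sum_eq_zero_iff_of_nonneg fun i _ => hb i).1 hB.symm i
      (Finset.mem_univ i)
    simp [hab _ (hb0 _)]
  -- Jensen for `x log x` with weights `b i / B` at the points `a i / b i`
  have hterm i : b i / B * (a i / b i) = a i / B ∧
      b i / B * (a i / b i * Real.log (a i / b i)) = a i * Real.log (a i / b i) / B := by
    rcases eq_or_ne (b i) 0 with h | h
    · simp [h, hab i h]
    · constructor <;> field_simp
  have jensen := Real.convexOn_mul_log.map_sum_le (t := Finset.univ) (w := fun i => b i / B)
    (p := fun i => a i / b i) (fun i _ => div_nonneg (hb i) hB.le)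
    (by rw [← Finset.sum_div, div_self hB.ne'])
    (fun i _ => div_nonneg (ha i) (hb i))
  simp only [smul_eq_mul, fun i => (hterm i).1, fun i => (hterm i).2, ← Finset.sum_div] at jensen
  calc (∑ i, a i) * Real.log ((∑ i, a i) / B)
      = B * ((∑ i, a i) / B * Real.log ((∑ i, a i) / B)) := by
        rw [← mul_assoc, mul_div_cancel₀ _ hB.ne']
    _ ≤ B * ((∑ i, a i * Real.log (a i / b i)) / B) := by gcongr
    _ = ∑ i, a i * Real.log (a i / b i) := mul_div_cancel₀ _ hB.ne'

lemma mul_logb_sum_div_le {ι : Type*} [Fintype ι] (a b : ι → ℝ) (ha : ∀ i, 0 ≤ a i)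
    (hb : ∀ i, 0 ≤ b i) (hab : ∀ i, b i = 0 → a i = 0) :
    (∑ i, a i) * Real.logb 2 ((∑ i, a i) / ∑ i, b i) ≤ ∑ i, a i * Real.logb 2 (a i / b i) := by
  simp only [Real.logb, ← mul_div_assoc, ← Finset.sum_div]
  gcongr
  exact mul_log_sum_div_le a b ha hb hab

lemma preimage_prodMk_singleton {Ω A B : Type*} (U : Ω → A) (V : Ω → B) (a : A) (b : B) :
    (fun ω => (U ω, V ω)) ⁻¹' {(a, b)} = U ⁻¹' {a} ∩ V ⁻¹' {b} := by
  ext; simp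

def CondIndepDiscrete {Ω A B C : Type*} [MeasurableSpace Ω] (μ : Measure Ω) (U : Ω → A)
    (V : Ω → B) (Z : Ω → C) : Prop :=
  ∀ a b c, 0 < prob μ (Z ⁻¹' {c}) →
    prob μ (U ⁻¹' {a} ∩ V ⁻¹' {b} ∩ Z ⁻¹' {c}) / prob μ (Z ⁻¹' {c}) =
      prob μ (U ⁻¹' {a} ∩ Z ⁻¹' {c}) / prob μ (Z ⁻¹' {c}) *
        (prob μ (V ⁻¹' {b} ∩ Z ⁻¹' {c}) / prob μ (Z ⁻¹' {c}))

section ConditionalEntropy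

variable {Ω : Type*} [MeasurableSpace Ω] {μ : Measure Ω} {A A' B B' C D : Type*}

lemma prob_nonneg (s : Set Ω) : 0 ≤ prob μ s := ENNReal.toReal_nonneg

lemma prob_mono [IsFiniteMeasure μ] {s t : Set Ω} (h : s ⊆ t) : prob μ s ≤ prob μ t :=
  ENNReal.toReal_mono (measure_ne_top μ t) (measure_mono h)

lemma CondIndepDiscrete.div_eq [IsFiniteMeasure μ] {U : Ω → A} {V : Ω → B} {Z : Ω → C}
    (hUV : CondIndepDiscrete μ U V Z) {a : A} {b : B} {c : C}
    (hbc : 0 < prob μ (V ⁻¹' {b} ∩ Z ⁻¹' {c})) :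
    prob μ (U ⁻¹' {a} ∩ (V ⁻¹' {b} ∩ Z ⁻¹' {c})) / prob μ (V ⁻¹' {b} ∩ Z ⁻¹' {c})
      = prob μ (U ⁻¹' {a} ∩ Z ⁻¹' {c}) / prob μ (Z ⁻¹' {c}) := by
  have hc : 0 < prob μ (Z ⁻¹' {c}) := hbc.trans_le (prob_mono Set.inter_subset_right)
  have h := hUV a b c hc
  rw [Set.inter_assoc] at h
  field_simp at h
  rw [div_eq_div_iff hbc.ne' hc.ne', h]

variable [Fintype A] [Fintype A'] [Fintype B] [Fintype B'] [Fintype C] [Fintype D]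

lemma sum_prob_preimage_inter [IsFiniteMeasure μ] [MeasurableSpace A]
    [MeasurableSingletonClass A] {U : Ω → A} (hU : Measurable U) (s : Set Ω) :
    ∑ a, prob μ (U ⁻¹' {a} ∩ s) = prob μ s := by
  have h := sum_measure_preimage_singleton (μ := μ.restrict s) Finset.univ
    fun a _ => hU (measurableSet_singleton a)
  simp only [Finset.coe_univ, Set.preimage_univ, Measure.restrict_apply_univ,
    Measure.restrict_apply (hU (measurableSet_singleton _))] at h
  simp only [prob, ← ENNReal.toReal_sum fun a _ => measure_ne_top μ _, h]

lemma neg_mul_logb_div_eq_add {p q r : ℝ} (hp : 0 ≤ p) (hpq : p ≤ q) (hqr : q ≤ r) :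
    -p * Real.logb 2 (p / r) = -p * Real.logb 2 (q / r) + -p * Real.logb 2 (p / q) := by
  rcases hp.eq_or_lt with rfl | hp
  · simp
  have hq := hp.trans_le hpq
  rw [Real.logb_div hp.ne' (hq.trans_le hqr).ne', Real.logb_div hq.ne' (hq.trans_le hqr).ne',
    Real.logb_div hp.ne' hq.ne']
  ring

lemma neg_mul_logb_div_nonneg {p q : ℝ} (hp : 0 ≤ p) (hpq : p ≤ q) :
    0 ≤ -p * Real.logb 2 (p / q) := by
  rcases hp.eq_or_lt with rfl | hp
  · simp
  exact mul_nonneg_of_nonpos_of_nonpos (neg_nonpos.2 hp.le) <| Real.logb_nonpos one_lt_two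
    (div_nonneg hp.le (hp.trans_le hpq).le) ((div_le_one (hp.trans_le hpq)).2 hpq)

lemma sum_neg_mul_logb_div_sum_le (a : A → ℝ) (ha : ∀ u, 0 ≤ a u) :
    ∑ u, -a u * Real.logb 2 (a u / ∑ u, a u)
      ≤ (∑ u, a u) * Real.logb 2 (Fintype.card A) := by
  set S := ∑ u, a u
  rcases (Finset.sum_nonneg fun u _ => ha u : 0 ≤ S).eq_or_lt with hS | hS
  · have ha0 u : a u = 0 := (Finset.sum_eq_zero_iff_of_nonneg fun u _ => ha u).1 hS.symm u
      (Finset.mem_univ u)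
    simp [S, ha0]
  have hN : (0 : ℝ) < Fintype.card A := by
    obtain ⟨u, -⟩ := Finset.exists_ne_zero_of_sum_ne_zero hS.ne'
    exact_mod_cast Fintype.card_pos_iff.2 ⟨u⟩
  have hlogsum := mul_logb_sum_div_le a (fun _ => 1) ha (fun _ => zero_le_one) (by simp)
  simp only [div_one, Finset.sum_const, Finset.card_univ, nsmul_eq_mul, mul_one] at hlogsum
  rw [Real.logb_div hS.ne' hN.ne'] at hlogsum
  have hsplit u : -a u * Real.logb 2 (a u / S) = -(a u * Real.logb 2 (a u))
      + a u * Real.logb 2 S := by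
    rcases (ha u).eq_or_lt with h | h
    · simp [← h]
    · rw [Real.logb_div h.ne' hS.ne']; ring
  rw [Finset.sum_congr rfl fun u _ => hsplit u, Finset.sum_add_distrib, Finset.sum_neg_distrib,
    ← Finset.sum_mul]
  linarith

lemma condEntropy_nonneg [IsFiniteMeasure μ] (U : Ω → A) (V : Ω → B) :
    0 ≤ condEntropy μ U V :=
  Finset.sum_nonneg fun _ _ => Finset.sum_nonneg fun _ _ =>
    neg_mul_logb_div_nonneg (prob_nonneg _) (prob_mono Set.inter_subset_right)

lemma condEntropy_congr_left (g : A ≃ A') (U : Ω → A) (V : Ω → B) :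
    condEntropy μ (fun ω => g (U ω)) V = condEntropy μ U V := by
  unfold condEntropy
  refine Finset.sum_congr rfl fun v _ => (Fintype.sum_equiv g _ _ fun u => ?_).symm
  rw [show (fun ω => g (U ω)) ⁻¹' {g u} = U ⁻¹' {u} by ext; simp]

lemma condEntropy_congr_right (g : B ≃ B') (U : Ω → A) (V : Ω → B) :
    condEntropy μ U (fun ω => g (V ω)) = condEntropy μ U V := by
  unfold condEntropy
  refine (Fintype.sum_equiv g _ _ fun v => ?_).symm
  rw [show (fun ω => g (V ω)) ⁻¹' {g v} = V ⁻¹' {v} by ext; simp]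

lemma condEntropy_prod_comm (U : Ω → A) (V : Ω → B) (Z : Ω → C) :
    condEntropy μ (fun ω => (U ω, V ω)) Z = condEntropy μ (fun ω => (V ω, U ω)) Z :=
  (condEntropy_congr_left (Equiv.prodComm A B) (fun ω => (U ω, V ω)) Z).symm

lemma condEntropy_prod_eq [IsFiniteMeasure μ] [MeasurableSpace B] [MeasurableSingletonClass B]
    (U : Ω → A) {V : Ω → B} (hV : Measurable V) (Z : Ω → C) :
    condEntropy μ (fun ω => (U ω, V ω)) Z
      = condEntropy μ U Z + condEntropy μ V (fun ω => (U ω, Z ω)) := by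
  unfold condEntropy
  simp only [Fintype.sum_prod_type, preimage_prodMk_singleton]
  rw [Finset.sum_comm (γ := A) (s := Finset.univ), ← Finset.sum_add_distrib]
  refine Finset.sum_congr rfl fun z _ => ?_
  rw [← Finset.sum_add_distrib]
  refine Finset.sum_congr rfl fun u _ => ?_
  simp only [Set.inter_comm (U ⁻¹' {u}) (V ⁻¹' _), Set.inter_assoc]
  rw [Finset.sum_congr rfl fun v _ => neg_mul_logb_div_eq_add (prob_nonneg _)
      (prob_mono Set.inter_subset_right) (prob_mono Set.inter_subset_right),
    Finset.sum_add_distrib, ← Finset.sum_mul, Finset.sum_neg_distrib,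
    sum_prob_preimage_inter hV]

lemma condEntropy_prod_le [IsFiniteMeasure μ] [MeasurableSpace B] [MeasurableSingletonClass B]
    (U : Ω → A) {V : Ω → B} (hV : Measurable V) (Z : Ω → C) :
    condEntropy μ U (fun ω => (V ω, Z ω)) ≤ condEntropy μ U Z := by
  unfold condEntropy
  simp only [Fintype.sum_prod_type, preimage_prodMk_singleton]
  rw [Finset.sum_comm]
  refine Finset.sum_le_sum fun z _ => ?_
  rw [Finset.sum_comm]
  refine Finset.sum_le_sum fun u _ => ?_
  have hlogsum := mul_logb_sum_div_le
    (fun v => prob μ (V ⁻¹' {v} ∩ (U ⁻¹' {u} ∩ Z ⁻¹' {z})))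
    (fun v => prob μ (V ⁻¹' {v} ∩ Z ⁻¹' {z})) (fun _ => prob_nonneg _)
    (fun _ => prob_nonneg _) fun v hv =>
      le_antisymm (hv ▸ prob_mono fun ω h => ⟨h.1, h.2.2⟩) (prob_nonneg _)
  simp only [sum_prob_preimage_inter hV] at hlogsum
  simp only [Set.inter_left_comm (U ⁻¹' {u}) (V ⁻¹' _), neg_mul, Finset.sum_neg_distrib]
  exact neg_le_neg hlogsum

lemma condEntropy_prod_eq_of_condIndep [IsFiniteMeasure μ] [MeasurableSpace B]
    [MeasurableSingletonClass B] {U : Ω → A} {V : Ω → B} (hV : Measurable V) {Z : Ω → C}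
    (hUV : CondIndepDiscrete μ U V Z) :
    condEntropy μ U (fun ω => (V ω, Z ω)) = condEntropy μ U Z := by
  unfold condEntropy
  simp only [Fintype.sum_prod_type, preimage_prodMk_singleton]
  rw [Finset.sum_comm]
  refine Finset.sum_congr rfl fun z _ => ?_
  rw [Finset.sum_comm]
  refine Finset.sum_congr rfl fun u _ => ?_
  have hterm v : -prob μ (U ⁻¹' {u} ∩ (V ⁻¹' {v} ∩ Z ⁻¹' {z})) * Real.logb 2
        (prob μ (U ⁻¹' {u} ∩ (V ⁻¹' {v} ∩ Z ⁻¹' {z})) / prob μ (V ⁻¹' {v} ∩ Z ⁻¹' {z}))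
      = -prob μ (U ⁻¹' {u} ∩ (V ⁻¹' {v} ∩ Z ⁻¹' {z})) *
        Real.logb 2 (prob μ (U ⁻¹' {u} ∩ Z ⁻¹' {z}) / prob μ (Z ⁻¹' {z})) := by
    rcases (prob_nonneg (μ := μ) (U ⁻¹' {u} ∩ (V ⁻¹' {v} ∩ Z ⁻¹' {z}))).eq_or_lt with h0 | hpos
    · simp [← h0]
    · rw [hUV.div_eq (hpos.trans_le (prob_mono Set.inter_subset_right))]
  rw [Finset.sum_congr rfl fun v _ => hterm v, ← Finset.sum_mul, Finset.sum_neg_distrib]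
  simp only [Set.inter_left_comm (U ⁻¹' {u})]
  rw [sum_prob_preimage_inter hV]

lemma condEntropy_of_unique [IsProbabilityMeasure μ] [Unique C] (U : Ω → A) (Z : Ω → C) :
    condEntropy μ U Z = ∑ u, -prob μ (U ⁻¹' {u}) * Real.logb 2 (prob μ (U ⁻¹' {u})) := by
  have hZ : Z ⁻¹' {default} = Set.univ :=
    Set.eq_univ_of_forall fun ω => Unique.eq_default (Z ω)
  simp [condEntropy, hZ, prob]

lemma condEntropy_le_sum_neg_mul_logb [IsProbabilityMeasure μ] [MeasurableSpace B]
    [MeasurableSingletonClass B] (U : Ω → A) {V : Ω → B} (hV : Measurable V) :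
    condEntropy μ U V ≤ ∑ u, -prob μ (U ⁻¹' {u}) * Real.logb 2 (prob μ (U ⁻¹' {u})) :=
  calc condEntropy μ U V = condEntropy μ U (fun ω => (V ω, ())) :=
        condEntropy_congr_right (Equiv.prodPUnit B) U fun ω => (V ω, ())
    _ ≤ condEntropy μ U (fun _ => ()) := condEntropy_prod_le U hV _
    _ = _ := condEntropy_of_unique U _

lemma condEntropy_eq_logb_card_of_uniform [IsProbabilityMeasure μ] [Unique C] {U : Ω → A}
    (hU : ∀ a, μ (U ⁻¹' {a}) = (Fintype.card A : ENNReal)⁻¹) (Z : Ω → C) :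
    condEntropy μ U Z = Real.logb 2 (Fintype.card A) := by
  simp only [condEntropy_of_unique, prob, hU, ENNReal.toReal_inv, ENNReal.toReal_natCast,
    Real.logb_inv, Finset.sum_const, Finset.card_univ, nsmul_eq_mul]
  rcases eq_or_ne (Fintype.card A : ℝ) 0 with h | h
  · simp [h]
  · field_simp

lemma condEntropy_le_prob_mul_logb_card [IsFiniteMeasure μ] [MeasurableSpace A]
    [MeasurableSingletonClass A] [MeasurableSpace C] [MeasurableSingletonClass C] {U : Ω → A}
    {Z : Ω → C} (hU : Measurable U) (hZ : Measurable Z) (T : Finset C)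
    (hT : ∀ c ∉ T, ∃ a, Z ⁻¹' {c} ⊆ U ⁻¹' {a}) :
    condEntropy μ U Z ≤ prob μ (Z ⁻¹' T) * Real.logb 2 (Fintype.card A) := by
  classical
  have hslice c : ∑ u, -prob μ (U ⁻¹' {u} ∩ Z ⁻¹' {c}) *
        Real.logb 2 (prob μ (U ⁻¹' {u} ∩ Z ⁻¹' {c}) / prob μ (Z ⁻¹' {c}))
      ≤ if c ∈ T then prob μ (Z ⁻¹' {c}) * Real.logb 2 (Fintype.card A) else 0 := by
    split_ifs with hc
    · simpa only [sum_prob_preimage_inter hU] using sum_neg_mul_logb_div_sum_le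
        (fun u => prob μ (U ⁻¹' {u} ∩ Z ⁻¹' {c})) fun _ => prob_nonneg _
    obtain ⟨a, ha⟩ := hT c hc
    refine (Finset.sum_eq_zero fun u _ => ?_).le
    by_cases hu : u = a
    · rw [hu, Set.inter_eq_right.2 ha]
      rcases eq_or_ne (prob μ (Z ⁻¹' {c})) 0 with h | h <;> simp [h]
    · have : U ⁻¹' {u} ∩ Z ⁻¹' {c} = ∅ :=
        Set.eq_empty_of_forall_notMem fun ω h => hu (h.1.symm.trans (ha h.2))
      simp [this, prob]
  calc condEntropy μ U Z
      ≤ ∑ c, if c ∈ T then prob μ (Z ⁻¹' {c}) * Real.logb 2 (Fintype.card A) else 0 :=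
        Finset.sum_le_sum fun c _ => hslice c
    _ = prob μ (Z ⁻¹' T) * Real.logb 2 (Fintype.card A) := by
        rw [Finset.sum_ite_mem, Finset.univ_inter, ← Finset.sum_mul, prob,
          ← sum_measure_preimage_singleton T fun c _ => hZ (measurableSet_singleton c),
          ENNReal.toReal_sum fun c _ => measure_ne_top μ _]
        rfl

/-- **Fano's inequality.** -/
theorem condEntropy_le_binEnt_add [IsProbabilityMeasure μ] [MeasurableSpace A]
    [MeasurableSingletonClass A] [MeasurableSpace B] [MeasurableSingletonClass B] {U : Ω → A}
    {V : Ω → B} (hU : Measurable U) (hV : Measurable V) (d : B → A) :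
    condEntropy μ U V ≤ binEnt (prob μ {ω | d (V ω) ≠ U ω})
      + prob μ {ω | d (V ω) ≠ U ω} * Real.logb 2 (Fintype.card A) := by
  classical
  set Pe := prob μ {ω | d (V ω) ≠ U ω}
  set E : Ω → Bool := fun ω => decide (d (V ω) ≠ U ω)
  have hEtrue : E ⁻¹' {true} = {ω | d (V ω) ≠ U ω} := by ext; simp [E]
  have hcorrect : MeasurableSet {ω | d (V ω) = U ω} :=
    measurableSet_eq_fun ((measurable_of_countable d).comp hV) hU
  have hE : Measurable E := measurable_to_bool (hEtrue ▸ hcorrect.compl)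
  have hbin : condEntropy μ E V ≤ binEnt Pe := by
    refine (condEntropy_le_sum_neg_mul_logb E hV).trans_eq ?_
    have hEfalse : E ⁻¹' {false} = {ω | d (V ω) ≠ U ω}ᶜ := by ext; simp [E]
    have hfalse : prob μ (E ⁻¹' {false}) = 1 - Pe :=
      hEfalse ▸ probReal_compl_eq_one_sub hcorrect.compl
    rw [Fintype.sum_bool, hEtrue, hfalse, binEnt]
    ring
  -- on `E = false` the message is determined by the output: `U = d V`
  have herr : condEntropy μ U (fun ω => (E ω, V ω)) ≤ Pe * Real.logb 2 (Fintype.card A) := by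
    refine (condEntropy_le_prob_mul_logb_card hU (hE.prodMk hV) ({true} ×ˢ Finset.univ)
      fun ⟨b, v⟩ hbv => ⟨d v, fun ω hω => ?_⟩).trans_eq ?_
    · obtain rfl : b = false := by simpa using hbv
      obtain ⟨hdec, rfl⟩ : d (V ω) = U ω ∧ V ω = v := by simpa [E] using hω
      exact hdec.symm
    · congr 2
      ext ω
      simp [E]
  calc condEntropy μ U V ≤ condEntropy μ U V + condEntropy μ E (fun ω => (U ω, V ω)) :=
        le_add_of_nonneg_right (condEntropy_nonneg _ _)
    _ = condEntropy μ (fun ω => (U ω, E ω)) V := (condEntropy_prod_eq U hE V).symm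
    _ = condEntropy μ (fun ω => (E ω, U ω)) V := condEntropy_prod_comm _ _ _
    _ = condEntropy μ E V + condEntropy μ U (fun ω => (E ω, V ω)) := condEntropy_prod_eq E hU V
    _ ≤ binEnt Pe + Pe * Real.logb 2 (Fintype.card A) := add_le_add hbin herr

lemma condEntropy_sub_le_condMutInfo [IsFiniteMeasure μ] [MeasurableSpace A]
    [MeasurableSingletonClass A] [MeasurableSpace B] [MeasurableSingletonClass B]
    [MeasurableSpace C] [MeasurableSingletonClass C] {W : Ω → A} {X : Ω → B} {Y : Ω → C}
    (hW : Measurable W) (hX : Measurable X) (hY : Measurable Y) {Z : Ω → D}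
    (hYW : CondIndepDiscrete μ Y W fun ω => (X ω, Z ω)) :
    condEntropy μ W Z - condEntropy μ W (fun ω => (Y ω, Z ω)) ≤ condMutInfo μ X Y Z := by
  have hcomm : condEntropy μ Y (fun ω => (X ω, W ω, Z ω))
      = condEntropy μ Y (fun ω => (W ω, X ω, Z ω)) :=
    (condEntropy_congr_right ((Equiv.prodAssoc B A D).symm.trans
      (((Equiv.prodComm B A).prodCongr (Equiv.refl D)).trans (Equiv.prodAssoc A B D))) Y _).symm
  calc condEntropy μ W Z - condEntropy μ W (fun ω => (Y ω, Z ω))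
      = condEntropy μ Y Z - condEntropy μ Y (fun ω => (W ω, Z ω)) := by
        linarith [condEntropy_prod_eq (μ := μ) W hY Z, condEntropy_prod_eq (μ := μ) Y hW Z,
          condEntropy_prod_comm (μ := μ) W Y Z]
    _ ≤ condEntropy μ Y Z - condEntropy μ Y (fun ω => (X ω, W ω, Z ω)) :=
        sub_le_sub_left (condEntropy_prod_le Y hX _) _
    _ = condEntropy μ Y Z - condEntropy μ Y (fun ω => (X ω, Z ω)) := by
        rw [hcomm, condEntropy_prod_eq_of_condIndep hW hYW]
    _ = condMutInfo μ X Y Z := by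
        rw [condMutInfo, condEntropy_prod_eq X hY Z]
        ring

end ConditionalEntropy

theorem Fin.sum_castSucc_sub_succ {M : Type*} [AddCommGroup M] {n : ℕ} (f : Fin (n + 1) → M) :
    ∑ i : Fin n, (f i.castSucc - f i.succ) = f 0 - f (Fin.last n) := by
  rw [Finset.sum_sub_distrib, sub_eq_sub_iff_add_eq_add, ← Fin.sum_univ_castSucc f,
    Fin.sum_univ_succ f]

/-- `past` extended to the times `k ≤ n`: `past Y i = pastUpTo Y i.castSucc` definitionally. -/
def pastUpTo {Ω 𝒴 : Type*} {n : ℕ} (Y : Fin n → Ω → 𝒴) (k : Fin (n + 1)) (ω : Ω) :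
    Fin k → 𝒴 :=
  fun j => Y (Fin.castLE k.is_le j) ω

section Feedback

variable {Ω : Type*} [MeasurableSpace Ω] {μ : Measure Ω} {𝒲 𝒳 𝒴 : Type*}
  [Fintype 𝒲] [Fintype 𝒳] [Fintype 𝒴] {n : ℕ}

lemma condEntropy_pastUpTo_succ (W : Ω → 𝒲) (Y : Fin n → Ω → 𝒴) (i : Fin n) :
    condEntropy μ W (pastUpTo Y i.succ) = condEntropy μ W (fun ω => (Y i ω, past Y i ω)) :=
  (condEntropy_congr_right (Fin.snocEquiv fun _ => 𝒴).symm W (pastUpTo Y i.succ)).symm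

theorem condEntropy_sub_le_sum_condMutInfo [IsFiniteMeasure μ] [MeasurableSpace 𝒲]
    [MeasurableSingletonClass 𝒲] [MeasurableSpace 𝒳] [MeasurableSingletonClass 𝒳]
    [MeasurableSpace 𝒴] [MeasurableSingletonClass 𝒴] {W : Ω → 𝒲}
    {X : Fin n → Ω → 𝒳} {Y : Fin n → Ω → 𝒴} (hW : Measurable W) (hX : ∀ i, Measurable (X i))
    (hY : ∀ i, Measurable (Y i))
    (hCI : ∀ i, CondIndepDiscrete μ (Y i) W fun ω => (X i ω, past Y i ω)) :
    condEntropy μ W (pastUpTo Y 0) - condEntropy μ W (fun ω i => Y i ω)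
      ≤ ∑ i, condMutInfo μ (X i) (Y i) (past Y i) :=
  calc condEntropy μ W (pastUpTo Y 0) - condEntropy μ W (fun ω i => Y i ω)
      = ∑ i : Fin n, (condEntropy μ W (pastUpTo Y i.castSucc)
          - condEntropy μ W (pastUpTo Y i.succ)) :=
        (Fin.sum_castSucc_sub_succ fun k => condEntropy μ W (pastUpTo Y k)).symm
    _ ≤ ∑ i, condMutInfo μ (X i) (Y i) (past Y i) := Finset.sum_le_sum fun i _ => by
        rw [condEntropy_pastUpTo_succ]
        exact condEntropy_sub_le_condMutInfo hW (hX i) (hY i) (hCI i)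

end Feedback

theorem stmt12_general {Ω : Type*} [MeasurableSpace Ω] (μ : Measure Ω) [IsProbabilityMeasure μ]
    {𝒲 𝒳 𝒴 : Type*} [Fintype 𝒲] [Fintype 𝒳] [Fintype 𝒴]
    [MeasurableSpace 𝒲] [MeasurableSingletonClass 𝒲]
    [MeasurableSpace 𝒳] [MeasurableSingletonClass 𝒳]
    [MeasurableSpace 𝒴] [MeasurableSingletonClass 𝒴]
    (n : ℕ)
    (W : Ω → 𝒲) (X : Fin n → Ω → 𝒳) (Y : Fin n → Ω → 𝒴)
    (hW : Measurable W) (hX : ∀ i, Measurable (X i)) (hY : ∀ i, Measurable (Y i))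
    (hunif : ∀ w : 𝒲, μ (W ⁻¹' {w}) = (Fintype.card 𝒲 : ENNReal)⁻¹)
    (hCI : ∀ (i : Fin n) (y : 𝒴) (w : 𝒲) (x : 𝒳) (yp : Fin i → 𝒴),
      0 < prob μ ((X i) ⁻¹' {x} ∩ (past Y i) ⁻¹' {yp}) →
      prob μ ((Y i) ⁻¹' {y} ∩ W ⁻¹' {w} ∩ (X i) ⁻¹' {x} ∩ (past Y i) ⁻¹' {yp}) /
          prob μ ((X i) ⁻¹' {x} ∩ (past Y i) ⁻¹' {yp}) =
        (prob μ ((Y i) ⁻¹' {y} ∩ (X i) ⁻¹' {x} ∩ (past Y i) ⁻¹' {yp}) /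
            prob μ ((X i) ⁻¹' {x} ∩ (past Y i) ⁻¹' {yp})) *
          (prob μ (W ⁻¹' {w} ∩ (X i) ⁻¹' {x} ∩ (past Y i) ⁻¹' {yp}) /
            prob μ ((X i) ⁻¹' {x} ∩ (past Y i) ⁻¹' {yp})))
    (d : (Fin n → 𝒴) → 𝒲) (Pe : ℝ)
    (hPe : Pe = prob μ {ω | d (fun i => Y i ω) ≠ W ω}) :
    Real.logb 2 (Fintype.card 𝒲) ≤
      (∑ i : Fin n, condMutInfo μ (X i) (Y i) (past Y i)) +
        binEnt Pe + Pe * Real.logb 2 (Fintype.card 𝒲) := by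
  have hindep i : CondIndepDiscrete μ (Y i) W fun ω => (X i ω, past Y i ω) := by
    rintro y w ⟨x, yp⟩ h
    simp only [preimage_prodMk_singleton, ← Set.inter_assoc] at h ⊢
    exact hCI i y w x yp h
  -- instance search does not reduce `((0 : Fin (n + 1)) : ℕ)` to `0`
  have : IsEmpty (Fin (0 : Fin (n + 1))) := Fin.isEmpty'
  have hstart : condEntropy μ W (pastUpTo Y 0) = Real.logb 2 (Fintype.card 𝒲) :=
    condEntropy_eq_logb_card_of_uniform hunif _
  have hdirected := condEntropy_sub_le_sum_condMutInfo hW hX hY hindep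
  have hfano := condEntropy_le_binEnt_add (μ := μ) hW (measurable_pi_lambda _ hY) d
  rw [← hPe] at hfano
  linarith

/-- **Fano-type converse for causal encoding with feedback.** If `W` is uniform on a
finite message set of size `M ≥ 2`, `X_i = e_i(W, Y^{i-1})` a.s., `Y_i` is conditionally
independent of `W` given `(X_i, Y^{i-1})`, `Ŵ = d(Y^n)` and `P_e = P(Ŵ ≠ W)`, then
`log₂ M ≤ ∑ i, I(X_i ; Y_i | Y^{i-1}) + h_b(P_e) + P_e log₂ M`. -/
theorem stmt12 {Ω : Type*} [MeasurableSpace Ω] (μ : Measure Ω) [IsProbabilityMeasure μ]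
    {𝒲 𝒳 𝒴 : Type*} [Fintype 𝒲] [Fintype 𝒳] [Fintype 𝒴]
    [MeasurableSpace 𝒲] [MeasurableSingletonClass 𝒲]
    [MeasurableSpace 𝒳] [MeasurableSingletonClass 𝒳]
    [MeasurableSpace 𝒴] [MeasurableSingletonClass 𝒴]
    (hM : 2 ≤ Fintype.card 𝒲)
    (n : ℕ) (hn : 1 ≤ n)
    (W : Ω → 𝒲) (X : Fin n → Ω → 𝒳) (Y : Fin n → Ω → 𝒴)
    (hW : Measurable W) (hX : ∀ i, Measurable (X i)) (hY : ∀ i, Measurable (Y i))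
    (hunif : ∀ w : 𝒲, μ (W ⁻¹' {w}) = (Fintype.card 𝒲 : ENNReal)⁻¹)
    (e : (i : Fin n) → 𝒲 × (Fin i → 𝒴) → 𝒳)
    (henc : ∀ i : Fin n, ∀ᵐ ω ∂μ, X i ω = e i (W ω, past Y i ω))
    (hCI : ∀ (i : Fin n) (y : 𝒴) (w : 𝒲) (x : 𝒳) (yp : Fin i → 𝒴),
      0 < prob μ ((X i) ⁻¹' {x} ∩ (past Y i) ⁻¹' {yp}) →
      prob μ ((Y i) ⁻¹' {y} ∩ W ⁻¹' {w} ∩ (X i) ⁻¹' {x} ∩ (past Y i) ⁻¹' {yp}) /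
          prob μ ((X i) ⁻¹' {x} ∩ (past Y i) ⁻¹' {yp}) =
        (prob μ ((Y i) ⁻¹' {y} ∩ (X i) ⁻¹' {x} ∩ (past Y i) ⁻¹' {yp}) /
            prob μ ((X i) ⁻¹' {x} ∩ (past Y i) ⁻¹' {yp})) *
          (prob μ (W ⁻¹' {w} ∩ (X i) ⁻¹' {x} ∩ (past Y i) ⁻¹' {yp}) /
            prob μ ((X i) ⁻¹' {x} ∩ (past Y i) ⁻¹' {yp})))
    (d : (Fin n → 𝒴) → 𝒲) (Pe : ℝ)
    (hPe : Pe = prob μ {ω | d (fun i => Y i ω) ≠ W ω}) :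
    Real.logb 2 (Fintype.card 𝒲) ≤
      (∑ i : Fin n, condMutInfo μ (X i) (Y i) (past Y i)) +
        binEnt Pe + Pe * Real.logb 2 (Fintype.card 𝒲) :=
  stmt12_general μ n W X Y hW hX hY hunif hCI d Pe hPe
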